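/- Let V be the free ℤ-module on {1, X} with Khovanov multiplication m and comultiplication Δ. Consider the two parallel edges cube: C⁰ = V⊗V, C¹ = V ⊕ V, C² = V⊗V, with d⁰(v) = (m(v), m(v)) and d¹(a, b) = Δ(a) − Δ(b). Then d¹ ∘ d⁰ = 0 and ker d¹ = im d⁰; in particular the first homology of this complex is trivial. -/

import Mathlib

open TensorProduct

/-- The Khovanov Frobenius algebra `V = ℤ⟨1, X⟩` modeled as `ℤ × ℤ`
(first coordinate: coefficient of `1`, second: coefficient of `X`). -/
abbrev V : Type := ℤ × ℤ

/-- The basis vector `1`. -/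
def e1 : V := (1, 0)

/-- The basis vector `X`. -/
def eX : V := (0, 1)

/-- Khovanov multiplication: `m(1⊗1)=1, m(1⊗X)=m(X⊗1)=X, m(X⊗X)=0`. -/
noncomputable def m : V ⊗[ℤ] V →ₗ[ℤ] V :=
  TensorProduct.lift <| LinearMap.mk₂ ℤ
    (fun v w => (v.1 * w.1, v.1 * w.2 + v.2 * w.1))
    (by intro a b c; simp [Prod.ext_iff]; constructor <;> ring)
    (by intro z a b; simp [Prod.ext_iff]; constructor <;> ring)
    (by intro a b c; simp [Prod.ext_iff]; constructor <;> ring)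
    (by intro z a b; simp [Prod.ext_iff]; constructor <;> ring)

/-- Khovanov comultiplication: `Δ(1)=1⊗X+X⊗1, Δ(X)=X⊗X`. -/
noncomputable def Δ : V →ₗ[ℤ] V ⊗[ℤ] V where
  toFun v := v.1 • (e1 ⊗ₜ[ℤ] eX + eX ⊗ₜ[ℤ] e1) + v.2 • (eX ⊗ₜ[ℤ] eX)
  map_add' a b := by simp [add_smul]; abel
  map_smul' z a := by simp [mul_smul, smul_add]
/-- Degree-0 differential of the Khovanov cube of the Hopf link diagram. -/
noncomputable def d0 : V ⊗[ℤ] V →ₗ[ℤ] V × V := LinearMap.prod m m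

/-- Degree-1 differential: `(a, b) ↦ Δ(a) - Δ(b)`. -/
noncomputable def d1 : V × V →ₗ[ℤ] V ⊗[ℤ] V :=
  Δ ∘ₗ LinearMap.fst ℤ V V - Δ ∘ₗ LinearMap.snd ℤ V V


/-- Coordinate functional extracting coefficient of `1 ⊗ X`. -/
noncomputable def φ1 : V ⊗[ℤ] V →ₗ[ℤ] ℤ :=
  TensorProduct.lift <| LinearMap.mk₂ ℤ (fun v w => v.1 * w.2)
    (by intro a b c; simp only [Prod.fst_add]; ring) (by intro z a b; simp; ring)
    (by intro a b c; simp only [Prod.snd_add]; ring) (by intro z a b; simp; ring)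

/-- Coordinate functional extracting coefficient of `X ⊗ X`. -/
noncomputable def φ2 : V ⊗[ℤ] V →ₗ[ℤ] ℤ :=
  TensorProduct.lift <| LinearMap.mk₂ ℤ (fun v w => v.2 * w.2)
    (by intro a b c; simp only [Prod.snd_add]; ring) (by intro z a b; simp; ring)
    (by intro a b c; simp only [Prod.snd_add]; ring) (by intro z a b; simp; ring)

lemma φ1_tmul (a b : V) : φ1 (a ⊗ₜ[ℤ] b) = a.1 * b.2 := TensorProduct.lift.tmul _ _

lemma φ2_tmul (a b : V) : φ2 (a ⊗ₜ[ℤ] b) = a.2 * b.2 := TensorProduct.lift.tmul _ _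

lemma m_tmul (a b : V) : m (a ⊗ₜ[ℤ] b) = (a.1 * b.1, a.1 * b.2 + a.2 * b.1) :=
  TensorProduct.lift.tmul _ _

lemma φ1_Δ (v : V) : φ1 (Δ v) = v.1 := by
  simp only [Δ, LinearMap.coe_mk, AddHom.coe_mk, map_add, map_smul, φ1_tmul, e1, eX]
  simp

lemma φ2_Δ (v : V) : φ2 (Δ v) = v.2 := by
  simp only [Δ, LinearMap.coe_mk, AddHom.coe_mk, map_add, map_smul, φ2_tmul, e1, eX]
  simp

lemma Δ_inj : Function.Injective Δ := by
  intro a b h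
  have h1 := congrArg φ1 h
  have h2 := congrArg φ2 h
  rw [φ1_Δ, φ1_Δ] at h1
  rw [φ2_Δ, φ2_Δ] at h2
  exact Prod.ext h1 h2

lemma d1_comp_d0 : d1 ∘ₗ d0 = 0 := by
  rw [d1, d0, LinearMap.sub_comp, LinearMap.comp_assoc, LinearMap.comp_assoc,
    LinearMap.fst_prod, LinearMap.snd_prod, sub_self]

/-- The Hopf-link cube complex is a complex and its first (unnormalized)
Khovanov homology vanishes: `ker d¹ = im d⁰`. -/
theorem khovanov_hopf_first_homology_trivial :
    d1 ∘ₗ d0 = 0 ∧ LinearMap.ker d1 = LinearMap.range d0 := by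
  refine ⟨d1_comp_d0, le_antisymm ?_ ?_⟩
  · intro p hp
    obtain ⟨a, b⟩ := p
    have hΔ : Δ a = Δ b := by
      have : d1 (a, b) = 0 := hp
      simpa [d1, sub_eq_zero] using this
    obtain rfl : a = b := Δ_inj hΔ
    refine ⟨a ⊗ₜ[ℤ] e1, ?_⟩
    have hm : m (a ⊗ₜ[ℤ] e1) = a := by
      simp [m_tmul, e1]
    simp [d0, hm]
  · rintro x ⟨v, rfl⟩
    have := congrFun (congrArg (fun f => f.toFun) d1_comp_d0) v
    simpa [LinearMap.mem_ker] using this
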